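/- arXiv:1307.8439 — 6 statements merged into one kernel-verified Lean document; each statement's English description precedes it below -/
import Mathlib

section
/- Let k ≥ 1 and let E_1, ..., E_k be Lebesgue measurable subsets of ℝ with positive finite measure. Let α, β > 0 with |E_i| ≥ α + β for each i. Define the truncation E_i(α,β) = E_i ∩ [a_i, b_i] where a_i is the minimum real number with |E_i ∩ (-∞, a_i]| = α and b_i is the maximum real number with |E_i ∩ [b_i, ∞)| = β. If ⋂_{i=1}^k E_i(α,β) ≠ ∅, then |⋂_{i=1}^k E_i| ≤ α + β + |⋂_{i=1}^k E_i(α,β)|. -/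
/-!
Every point of `⋂ i, E i` lies left of `max a`, right of `min b`, or in between. The first part
lies in `E j ∩ (-∞, a j]` for the index `j` maximising `a`, so has measure at most `α`; likewise
the last part has measure at most `β`; and the middle part lies in every truncation `E i(α,β)`.
-/

open MeasureTheory Set

theorem measure_le_inter_Iic_add_inter_Icc_add_inter_Ici {α : Type*} [MeasurableSpace α]
    [LinearOrder α] (μ : Measure α) (S : Set α) (p q : α) :
    μ S ≤ μ (S ∩ Iic p) + μ (S ∩ Icc p q) + μ (S ∩ Ici q) := by
  have hcover : S ⊆ (S ∩ Iic p) ∪ (S ∩ Icc p q) ∪ (S ∩ Ici q) := by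
    intro x hx
    rcases le_total x p with hxp | hpx
    · exact Or.inl (Or.inl ⟨hx, hxp⟩)
    rcases le_total x q with hxq | hqx
    · exact Or.inl (Or.inr ⟨hx, hpx, hxq⟩)
    · exact Or.inr ⟨hx, hqx⟩
  calc μ S ≤ μ ((S ∩ Iic p) ∪ (S ∩ Icc p q) ∪ (S ∩ Ici q)) := measure_mono hcover
    _ ≤ μ (S ∩ Iic p) + μ (S ∩ Icc p q) + μ (S ∩ Ici q) :=
      (measure_union_le _ _).trans (by gcongr; exact measure_union_le _ _)

theorem measure_iInter_le_add_measure_iInter_inter_Icc {α ι : Type*} [MeasurableSpace α]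
    [LinearOrder α] [Finite ι] [Nonempty ι] (μ : Measure α) (E : ι → Set α) (a b : ι → α)
    (A B : ENNReal) (hA : ∀ i, μ (E i ∩ Iic (a i)) ≤ A) (hB : ∀ i, μ (E i ∩ Ici (b i)) ≤ B) :
    μ (⋂ i, E i) ≤ A + μ (⋂ i, E i ∩ Icc (a i) (b i)) + B := by
  obtain ⟨j, hj⟩ := Finite.exists_max a
  obtain ⟨l, hl⟩ := Finite.exists_min b
  have hleft : μ ((⋂ i, E i) ∩ Iic (a j)) ≤ A :=
    (measure_mono (inter_subset_inter_left _ (iInter_subset _ j))).trans (hA j)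
  have hright : μ ((⋂ i, E i) ∩ Ici (b l)) ≤ B :=
    (measure_mono (inter_subset_inter_left _ (iInter_subset _ l))).trans (hB l)
  have hmiddle : (⋂ i, E i) ∩ Icc (a j) (b l) ⊆ ⋂ i, E i ∩ Icc (a i) (b i) :=
    fun x ⟨hx, hjx, hxl⟩ ↦ mem_iInter.2 fun i ↦
      ⟨mem_iInter.1 hx i, (hj i).trans hjx, hxl.trans (hl i)⟩
  calc μ (⋂ i, E i)
      ≤ μ ((⋂ i, E i) ∩ Iic (a j)) + μ ((⋂ i, E i) ∩ Icc (a j) (b l))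
          + μ ((⋂ i, E i) ∩ Ici (b l)) :=
        measure_le_inter_Iic_add_inter_Icc_add_inter_Ici μ _ _ _
    _ ≤ A + μ (⋂ i, E i ∩ Icc (a i) (b i)) + B := by gcongr

theorem stmt0_general (k : ℕ) (hk : 1 ≤ k) (E : Fin k → Set ℝ)
    (α β : ℝ) (hα : 0 < α) (hβ : 0 < β)
    (a b : Fin k → ℝ)
    (ha : ∀ i, IsLeast {t : ℝ | volume (E i ∩ Iic t) = ENNReal.ofReal α} (a i))
    (hb : ∀ i, IsGreatest {t : ℝ | volume (E i ∩ Ici t) = ENNReal.ofReal β} (b i)) :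
    volume (⋂ i, E i) ≤
      ENNReal.ofReal (α + β) + volume (⋂ i, E i ∩ Icc (a i) (b i)) := by
  have : Nonempty (Fin k) := ⟨⟨0, hk⟩⟩
  calc volume (⋂ i, E i)
      ≤ ENNReal.ofReal α + volume (⋂ i, E i ∩ Icc (a i) (b i)) + ENNReal.ofReal β :=
        measure_iInter_le_add_measure_iInter_inter_Icc volume E a b _ _
          (fun i ↦ (ha i).1.le) (fun i ↦ (hb i).1.le)
    _ = ENNReal.ofReal (α + β) + volume (⋂ i, E i ∩ Icc (a i) (b i)) := by
        rw [ENNReal.ofReal_add hα.le hβ.le]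
        ring

/-- Truncation inequality: for measurable sets `E i` of positive finite measure with
`|E i| ≥ α + β`, truncating each set by removing measure `α` from the left and `β` from
the right (via the minimal `a i` and maximal `b i`), if the truncations have a common
point then `|⋂ E i| ≤ α + β + |⋂ E i (α,β)|`. -/
theorem stmt0 (k : ℕ) (hk : 1 ≤ k) (E : Fin k → Set ℝ)
    (hmeas : ∀ i, MeasurableSet (E i))
    (hpos : ∀ i, 0 < volume (E i)) (hfin : ∀ i, volume (E i) < ⊤)
    (α β : ℝ) (hα : 0 < α) (hβ : 0 < β)
    (hge : ∀ i, ENNReal.ofReal (α + β) ≤ volume (E i))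
    (a b : Fin k → ℝ)
    (ha : ∀ i, IsLeast {t : ℝ | volume (E i ∩ Iic t) = ENNReal.ofReal α} (a i))
    (hb : ∀ i, IsGreatest {t : ℝ | volume (E i ∩ Ici t) = ENNReal.ofReal β} (b i))
    (hne : (⋂ i, E i ∩ Icc (a i) (b i)).Nonempty) :
    volume (⋂ i, E i) ≤
      ENNReal.ofReal (α + β) + volume (⋂ i, E i ∩ Icc (a i) (b i)) :=
  stmt0_general k hk E α β hα hβ a b ha hb
end

section
/- Let k ≥ 1 and let E_1, ..., E_k be closed bounded intervals in ℝ, each of length at least α + β, where α, β > 0. If ⋂_{i=1}^k E_i(α,β) ≠ ∅, then |⋂_{i=1}^k E_i| = α + β + |⋂_{i=1}^k E_i(α,β)|, where E_i(α,β) denotes the truncation of E_i obtained by removing the leftmost portion of measure α and the rightmost portion of measure β. -/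
open MeasureTheory Set

/-! The intersection of finitely many intervals `[c i, d i]` is `[C, D]` with `C = max c i`,
`D = min d i`, and the intersection of their truncations is `[C + α, D - β]`. When the latter
is nonempty, `[C, D]` is it together with the two end pieces of lengths `α` and `β`. -/

theorem iInter_Icc_add_sub {G ι : Type*} [ConditionallyCompleteLinearOrder G] [AddCommGroup G]
    [IsOrderedAddMonoid G] [Finite ι] [Nonempty ι] (c d : ι → G) (α β : G) :
    ⋂ i, Icc (c i + α) (d i - β) = Icc ((⨆ i, c i) + α) ((⨅ i, d i) - β) := by
  ext x
  simp only [mem_iInter, mem_Icc, forall_and, ← le_sub_iff_add_le (b := α) (c := x),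
    le_sub_iff_add_le (b := β) (a := x), ← ciSup_le_iff (finite_range c).bddAbove,
    ← le_ciInf_iff (finite_range d).bddBelow]

theorem iInter_Icc_eq_Icc_ciSup_ciInf {G ι : Type*} [ConditionallyCompleteLinearOrder G]
    [AddCommGroup G] [IsOrderedAddMonoid G] [Finite ι] [Nonempty ι] (c d : ι → G) :
    ⋂ i, Icc (c i) (d i) = Icc (⨆ i, c i) (⨅ i, d i) := by
  simpa using iInter_Icc_add_sub c d 0 0

theorem Real.volume_Icc_eq_ofReal_add_volume_Icc {a b α β : ℝ} (hα : 0 ≤ α) (hβ : 0 ≤ β)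
    (h : a + α ≤ b - β) :
    volume (Icc a b) = ENNReal.ofReal (α + β) + volume (Icc (a + α) (b - β)) := by
  rw [Real.volume_Icc, Real.volume_Icc, ← ENNReal.ofReal_add (by positivity) (by linarith)]
  ring_nf

theorem stmt1_general (k : ℕ) (c d : Fin k → ℝ) (α β : ℝ)
    (hα : 0 < α) (hβ : 0 < β)
    (hne : (⋂ i, Icc (c i + α) (d i - β)).Nonempty) :
    volume (⋂ i, Icc (c i) (d i)) =
      ENNReal.ofReal (α + β) + volume (⋂ i, Icc (c i + α) (d i - β)) := by
  rcases isEmpty_or_nonempty (Fin k) with hk | hk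
  · -- both intersections are `univ`, so both sides are `∞`
    simp [iInter_of_empty]
  · rw [iInter_Icc_add_sub] at hne ⊢
    rw [iInter_Icc_eq_Icc_ciSup_ciInf]
    exact Real.volume_Icc_eq_ofReal_add_volume_Icc hα.le hβ.le (nonempty_Icc.mp hne)

/-- Equality case of the truncation inequality for closed bounded intervals:
if `E i = [c i, d i]` has length at least `α + β` and the truncations
`[c i + α, d i - β]` have a common point, then
`|⋂ E i| = α + β + |⋂ E i (α,β)|`. -/
theorem stmt1 (k : ℕ) (hk : 1 ≤ k) (c d : Fin k → ℝ) (α β : ℝ)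
    (hα : 0 < α) (hβ : 0 < β)
    (hlen : ∀ i, α + β ≤ d i - c i)
    (hne : (⋂ i, Icc (c i + α) (d i - β)).Nonempty) :
    volume (⋂ i, Icc (c i) (d i)) =
      ENNReal.ofReal (α + β) + volume (⋂ i, Icc (c i + α) (d i - β)) :=
  stmt1_general k c d α β hα hβ hne
end

section
/- Let 0 ≤ α, β < ∞ and let {I_k} be a finite collection of closed bounded intervals in ℝ with |I_k| ≥ α + β for all k. Suppose ⋂_k I_k(α,β) ≠ ∅, and J is a closed interval with |J| ≥ α + β such that J(α,β) ⊇ ⋂_k I_k(α,β). Then J ⊇ ⋂_k I_k. -/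
open Set

/-!
For `x ∈ ⋂ I_k` and a point `y` of `⋂ I_k(α,β)`, the points `min (x + α) y` and `max (x - β) y`
still lie in `⋂ I_k(α,β)`, hence in `J(α,β) = [p + α, q - β]`; this forces `p ≤ x ≤ q`.
-/

section Truncation

variable {G ι : Type*} [AddCommGroup G] [LinearOrder G] [IsOrderedAddMonoid G]
  {c d : ι → G} {a b x y : G}

theorem min_add_mem_iInter_Icc_add_sub (hx : x ∈ ⋂ k, Icc (c k) (d k))
    (hy : y ∈ ⋂ k, Icc (c k + a) (d k - b)) :
    min (x + a) y ∈ ⋂ k, Icc (c k + a) (d k - b) := by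
  simp only [mem_iInter, mem_Icc] at hx hy ⊢
  exact fun k => ⟨le_min (add_le_add_left (hx k).1 a) (hy k).1,
    (min_le_right _ _).trans (hy k).2⟩

theorem max_sub_mem_iInter_Icc_add_sub (hx : x ∈ ⋂ k, Icc (c k) (d k))
    (hy : y ∈ ⋂ k, Icc (c k + a) (d k - b)) :
    max (x - b) y ∈ ⋂ k, Icc (c k + a) (d k - b) := by
  simp only [mem_iInter, mem_Icc] at hx hy ⊢
  exact fun k => ⟨(hy k).1.trans (le_max_right _ _),
    max_le (sub_le_sub_right (hx k).2 b) (hy k).2⟩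

end Truncation

theorem stmt2_general {ι : Type*} (α β : ℝ)
    (c d : ι → ℝ)
    (p q : ℝ)
    (hne : (⋂ k, Icc (c k + α) (d k - β)).Nonempty)
    (hsub : (⋂ k, Icc (c k + α) (d k - β)) ⊆ Icc (p + α) (q - β)) :
    (⋂ k, Icc (c k) (d k)) ⊆ Icc p q := by
  intro x hx
  obtain ⟨y, hy⟩ := hne
  have hlow := (hsub (min_add_mem_iInter_Icc_add_sub hx hy)).1
  have hupp := (hsub (max_sub_mem_iInter_Icc_add_sub hx hy)).2
  exact ⟨le_of_add_le_add_right (le_min_iff.1 hlow).1,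
    (sub_le_sub_iff_right β).1 (max_le_iff.1 hupp).1⟩

/-- If the truncations `I_k(α,β) = [c k + α, d k - β]` of a finite family of closed bounded
intervals have a common point, and the truncation `J(α,β) = [p+α, q-β]` of a closed interval
`J = [p,q]` contains `⋂ I_k(α,β)`, then `J ⊇ ⋂ I_k`. -/
theorem stmt2 {ι : Type*} [Fintype ι] [Nonempty ι] (α β : ℝ)
    (hα : 0 ≤ α) (hβ : 0 ≤ β)
    (c d : ι → ℝ) (hlen : ∀ k, α + β ≤ d k - c k)
    (p q : ℝ) (hJ : α + β ≤ q - p)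
    (hne : (⋂ k, Icc (c k + α) (d k - β)).Nonempty)
    (hsub : (⋂ k, Icc (c k + α) (d k - β)) ⊆ Icc (p + α) (q - β)) :
    (⋂ k, Icc (c k) (d k)) ⊆ Icc p q :=
  stmt2_general α β c d p q hne hsub
end

section
/- Let (L_j : 1 ≤ j ≤ n) be a nondegenerate family of surjective linear maps ℝ^m → ℝ, and let (E_1, ..., E_n) be a strictly admissible n-tuple of measurable subsets of ℝ. Then there exists ε > 0 such that any n-tuple (F_1, ..., F_n) of measurable subsets of ℝ satisfying ||E_j| − |F_j|| < ε for all j is also strictly admissible. -/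
/-!
Strict admissibility only depends on the radii `|E_j| / 2` of the strips, and for each `i` it is
witnessed by a point `x` lying in every strip `S_j^⋆`, `j ≠ i`, but outside `S_i^⋆`. Shrinking
`x` to `t • x` with `t < 1` close to `1` puts it in the interior of the strips `S_j^⋆`, `j ≠ i`,
while keeping it strictly outside `S_i^⋆`; both conditions are open in the radii, so they survive
small changes of the measures.
-/

open MeasureTheory Set

/-- The closed interval centered at `0` with the same measure as `E`. -/
def symInt (E : Set ℝ) : Set ℝ :=
  Set.Icc (-(MeasureTheory.volume E).toReal / 2) ((MeasureTheory.volume E).toReal / 2)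

/-- The strip in `ℝ^m` associated to `L j` and the symmetrized set `(E j)^*`. -/
def strip {m n : ℕ} (L : Fin n → ((Fin m → ℝ) →ₗ[ℝ] ℝ)) (E : Fin n → Set ℝ) (j : Fin n) :
    Set (Fin m → ℝ) :=
  {x | L j x ∈ symInt (E j)}

/-- Strict admissibility: each set is measurable with positive finite measure and no strip
`S_i^⋆` contains `⋂_{j ≠ i} S_j^⋆`. -/
def StrictAdm {m n : ℕ} (L : Fin n → ((Fin m → ℝ) →ₗ[ℝ] ℝ)) (E : Fin n → Set ℝ) : Prop :=
  (∀ j, MeasurableSet (E j) ∧ 0 < volume (E j) ∧ volume (E j) < ⊤) ∧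
    ∀ i, ¬ ((⋂ j ∈ ({i}ᶜ : Set (Fin n)), strip L E j) ⊆ strip L E i)

open Filter Topology

theorem exists_lt_one_lt_mul {a c : ℝ} (h : a < c) : ∃ t, 0 < t ∧ t < 1 ∧ a < t * c := by
  have hnear : ∀ᶠ t in 𝓝 (1 : ℝ), 0 < t ∧ a < t * c :=
    (lt_mem_nhds one_pos).and <|
      ((continuous_id.mul continuous_const).tendsto' 1 c (one_mul c)).eventually (lt_mem_nhds h)
  obtain ⟨t, ⟨ht0, hta⟩, ht1⟩ :=
    ((hnear.filter_mono nhdsWithin_le_nhds).and (self_mem_nhdsWithin (s := Iio 1))).exists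
  exact ⟨t, ht0, ht1, hta⟩

section EscapePoint

variable {ι V : Type*} [AddCommGroup V] [Module ℝ V]

def HasEscapePoint (L : ι → V →ₗ[ℝ] ℝ) (r : ι → ℝ) (i : ι) : Prop :=
  ∃ x, (∀ j, j ≠ i → |L j x| ≤ r j / 2) ∧ r i / 2 < |L i x|

theorem HasEscapePoint.eventually [Finite ι] {L : ι → V →ₗ[ℝ] ℝ} {r : ι → ℝ} {i : ι}
    (hr : ∀ j, j ≠ i → 0 < r j) (h : HasEscapePoint L r i) :
    ∀ᶠ s in 𝓝 r, HasEscapePoint L s i := by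
  obtain ⟨x, hin, hout⟩ := h
  obtain ⟨t, ht0, ht1, hti⟩ := exists_lt_one_lt_mul (c := |L i x|) hout
  have habs (j : ι) : |L j (t • x)| = t * |L j x| := by
    rw [map_smul, smul_eq_mul, abs_mul, abs_of_pos ht0]
  have hfar : ∀ᶠ s in 𝓝 r, s i < 2 * (t * |L i x|) :=
    ((continuous_apply i).tendsto r).eventually (gt_mem_nhds (by linarith))
  have hwide : ∀ᶠ s in 𝓝 r, ∀ j, j ≠ i → t * r j < s j := by
    refine eventually_all.2 fun j => ?_
    by_cases hj : j = i
    · exact Eventually.of_forall fun _ hji => absurd hj hji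
    · have : t * r j < r j := mul_lt_of_lt_one_left (hr j hj) ht1
      exact (((continuous_apply j).tendsto r).eventually (lt_mem_nhds this)).mono
        fun s hs _ => hs
  filter_upwards [hfar, hwide] with s hsi hsj
  refine ⟨t • x, fun j hj => ?_, by rw [habs]; linarith⟩
  rw [habs]
  nlinarith [hin j hj, hsj j hj]

end EscapePoint

lemma mem_strip_iff {m n : ℕ} (L : Fin n → ((Fin m → ℝ) →ₗ[ℝ] ℝ)) (E : Fin n → Set ℝ)
    (j : Fin n) (x : Fin m → ℝ) :
    x ∈ strip L E j ↔ |L j x| ≤ (volume (E j)).toReal / 2 := by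
  simp [strip, symInt, abs_le, neg_div, Set.mem_Icc]

lemma not_iInter_strip_subset_iff {m n : ℕ} (L : Fin n → ((Fin m → ℝ) →ₗ[ℝ] ℝ))
    (E : Fin n → Set ℝ) (i : Fin n) :
    ¬ ((⋂ j ∈ ({i}ᶜ : Set (Fin n)), strip L E j) ⊆ strip L E i) ↔
      HasEscapePoint L (fun j => (volume (E j)).toReal) i := by
  simp only [Set.not_subset, Set.mem_iInter₂, Set.mem_compl_singleton_iff, mem_strip_iff,
    not_le, HasEscapePoint]

lemma strictAdm_iff {m n : ℕ} (L : Fin n → ((Fin m → ℝ) →ₗ[ℝ] ℝ)) (E : Fin n → Set ℝ) :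
    StrictAdm L E ↔ (∀ j, MeasurableSet (E j) ∧ 0 < (volume (E j)).toReal) ∧
      ∀ i, HasEscapePoint L (fun j => (volume (E j)).toReal) i := by
  simp only [StrictAdm, not_iInter_strip_subset_iff, ENNReal.toReal_pos_iff]

theorem stmt5_general (m n : ℕ) (L : Fin n → ((Fin m → ℝ) →ₗ[ℝ] ℝ))
    (E : Fin n → Set ℝ) (hE : StrictAdm L E) :
    ∃ ε > (0 : ℝ), ∀ F : Fin n → Set ℝ, (∀ j, MeasurableSet (F j)) →
      (∀ j, |(volume (E j)).toReal - (volume (F j)).toReal| < ε) → StrictAdm L F := by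
  set r : Fin n → ℝ := fun j => (volume (E j)).toReal
  obtain ⟨hEpos, hEesc⟩ := (strictAdm_iff L E).1 hE
  have hr (j : Fin n) : 0 < r j := (hEpos j).2
  have hnear : ∀ᶠ s in 𝓝 r, (∀ j, 0 < s j) ∧ ∀ i, HasEscapePoint L s i :=
    (eventually_all.2 fun j => ((continuous_apply j).tendsto r).eventually (lt_mem_nhds (hr j))).and
      (eventually_all.2 fun i => (hEesc i).eventually fun j _ => hr j)
  obtain ⟨ε, hε, hball⟩ := Metric.eventually_nhds_iff.1 hnear
  refine ⟨ε, hε, fun F hF hclose => ?_⟩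
  have hdist : dist (fun j => (volume (F j)).toReal) r < ε :=
    (dist_pi_lt_iff hε).2 fun j => by rw [Real.dist_eq, abs_sub_comm]; exact hclose j
  obtain ⟨hFpos, hFesc⟩ := hball hdist
  exact (strictAdm_iff L F).2 ⟨fun j => ⟨hF j, hFpos j⟩, hFesc⟩

/-- Stability of strict admissibility under small perturbations of the measures. -/
theorem stmt5 (m n : ℕ) (L : Fin n → ((Fin m → ℝ) →ₗ[ℝ] ℝ))
    (hsurj : ∀ j, Function.Surjective (L j))
    (hnd : ∀ S : Finset (Fin n), S.card = m →
      Function.Bijective (fun (x : Fin m → ℝ) (j : S) => L j.1 x))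
    (E : Fin n → Set ℝ) (hE : StrictAdm L E) :
    ∃ ε > (0 : ℝ), ∀ F : Fin n → Set ℝ, (∀ j, MeasurableSet (F j)) →
      (∀ j, |(volume (E j)).toReal - (volume (F j)).toReal| < ε) → StrictAdm L F :=
  stmt5_general m n L E hE
end

section
/- Let E_1, E_2, E_3 ⊂ ℝ be measurable with finite measure, and suppose |E_3| > |E_1| + |E_2| and E_1, E_2 are bounded intervals. Let A ⊂ ℝ be any measurable set with |A| = |E_3| − |E_1| − |E_2|, disjoint from the sumset E_1 + E_2, and set E_3' = (E_1 + E_2) ∪ A. Then ∫∫ 1_{E_1}(x) 1_{E_2}(y) 1_{E_3'}(x+y) dx dy = ∫∫ 1_{E_1^*}(x) 1_{E_2^*}(y) 1_{(E_3')^*}(x+y) dx dy. -/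
/-!
Both sides are volumes of full rectangles. On the left, `E₁ + E₂ ⊆ E₃'`, so the constraint
`x + y ∈ E₃'` is automatic. On the right, `|E₃'| = |E₃| ≥ |E₁| + |E₂|`, so the sum of the
centred intervals `E₁^* + E₂^*` again lies inside `(E₃')^*`. Symmetrisation preserves the
lengths of `E₁` and `E₂`, hence the two rectangles have the same area.
-/

open MeasureTheory Set Pointwise

/-- The set whose area is the Riesz–Sobolev form `∫∫ 1_{E₁}(x) 1_{E₂}(y) 1_{E₃}(x + y) dx dy`. -/
def rieszSobolevSet {α : Type*} [Add α] (E₁ E₂ E₃ : Set α) : Set (α × α) :=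
  {p | p.1 ∈ E₁ ∧ p.2 ∈ E₂ ∧ p.1 + p.2 ∈ E₃}

theorem rieszSobolevSet_eq_prod_of_add_subset {α : Type*} [Add α] {E₁ E₂ E₃ : Set α}
    (h : E₁ + E₂ ⊆ E₃) : rieszSobolevSet E₁ E₂ E₃ = E₁ ×ˢ E₂ := by
  ext p
  exact ⟨fun hp => ⟨hp.1, hp.2.1⟩, fun hp => ⟨hp.1, hp.2, h (add_mem_add hp.1 hp.2)⟩⟩

theorem volume_rieszSobolevSet_of_add_subset {E₁ E₂ E₃ : Set ℝ} (h : E₁ + E₂ ⊆ E₃) :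
    volume (rieszSobolevSet E₁ E₂ E₃) = volume E₁ * volume E₂ := by
  rw [rieszSobolevSet_eq_prod_of_add_subset h, Measure.volume_eq_prod, Measure.prod_prod]

theorem volume_symInt {E : Set ℝ} (hE : volume E ≠ ⊤) : volume (symInt E) = volume E := by
  rw [symInt, Real.volume_Icc, neg_div, sub_neg_eq_add, add_halves, ENNReal.ofReal_toReal hE]

theorem symInt_add_symInt_subset {E₁ E₂ E₃ : Set ℝ} (h : volume E₁ + volume E₂ ≤ volume E₃)
    (h₃ : volume E₃ ≠ ⊤) : symInt E₁ + symInt E₂ ⊆ symInt E₃ := by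
  have hlen : (volume E₁).toReal + (volume E₂).toReal ≤ (volume E₃).toReal := by
    obtain ⟨h₁, h₂⟩ := ENNReal.add_ne_top.1 (ne_top_of_le_ne_top h₃ h)
    rw [← ENNReal.toReal_add h₁ h₂]
    exact ENNReal.toReal_mono h₃ h
  rintro _ ⟨x, ⟨hx₁, hx₂⟩, y, ⟨hy₁, hy₂⟩, rfl⟩
  constructor <;> linarith

theorem Real.volume_Icc_add_Icc {a₁ b₁ a₂ b₂ : ℝ} (h₁ : a₁ ≤ b₁) (h₂ : a₂ ≤ b₂) :
    volume (Icc a₁ b₁ + Icc a₂ b₂) = volume (Icc a₁ b₁) + volume (Icc a₂ b₂) := by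
  rw [Icc_add_Icc h₁ h₂, Real.volume_Icc, Real.volume_Icc, Real.volume_Icc,
    ← ENNReal.ofReal_add (sub_nonneg.2 h₁) (sub_nonneg.2 h₂)]
  ring_nf

theorem stmt9_general (a1 b1 a2 b2 : ℝ) (h1 : a1 ≤ b1) (h2 : a2 ≤ b2)
    (E3 A : Set ℝ) (hE3fin : volume E3 < ⊤)
    (hbig : volume (Icc a1 b1) + volume (Icc a2 b2) < volume E3)
    (hAdisj : Disjoint A (Icc a1 b1 + Icc a2 b2))
    (hAvol : volume A = volume E3 - volume (Icc a1 b1) - volume (Icc a2 b2)) :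
    volume {p : ℝ × ℝ | p.1 ∈ Icc a1 b1 ∧ p.2 ∈ Icc a2 b2 ∧
        p.1 + p.2 ∈ (Icc a1 b1 + Icc a2 b2) ∪ A} =
      volume {p : ℝ × ℝ | p.1 ∈ symInt (Icc a1 b1) ∧ p.2 ∈ symInt (Icc a2 b2) ∧
        p.1 + p.2 ∈ symInt ((Icc a1 b1 + Icc a2 b2) ∪ A)} := by
  have hvol : volume ((Icc a1 b1 + Icc a2 b2) ∪ A) = volume E3 := by
    have hmeas : MeasurableSet (Icc a1 b1 + Icc a2 b2) := Icc_add_Icc h1 h2 ▸ measurableSet_Icc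
    rw [measure_union' hAdisj.symm hmeas, Real.volume_Icc_add_Icc h1 h2, hAvol, tsub_tsub,
      add_tsub_cancel_of_le hbig.le]
  change volume (rieszSobolevSet _ _ _) = volume (rieszSobolevSet _ _ _)
  rw [volume_rieszSobolevSet_of_add_subset subset_union_left,
    volume_rieszSobolevSet_of_add_subset (symInt_add_symInt_subset (hvol ▸ hbig.le)
      (hvol ▸ hE3fin.ne)),
    volume_symInt measure_Icc_lt_top.ne, volume_symInt measure_Icc_lt_top.ne]

/-- Failure of uniqueness without admissibility: if `E₁, E₂` are bounded intervals,
`|E₃| > |E₁| + |E₂|`, and `E₃' = (E₁ + E₂) ∪ A` for an arbitrary measurable set `A`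
disjoint from the sumset with `|A| = |E₃| - |E₁| - |E₂|`, then equality holds in the
Riesz–Sobolev inequality for `(E₁, E₂, E₃')`. -/
theorem stmt9 (a1 b1 a2 b2 : ℝ) (h1 : a1 ≤ b1) (h2 : a2 ≤ b2)
    (E3 A : Set ℝ) (hE3m : MeasurableSet E3) (hE3fin : volume E3 < ⊤)
    (hbig : volume (Icc a1 b1) + volume (Icc a2 b2) < volume E3)
    (hAm : MeasurableSet A)
    (hAdisj : Disjoint A (Icc a1 b1 + Icc a2 b2))
    (hAvol : volume A = volume E3 - volume (Icc a1 b1) - volume (Icc a2 b2)) :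
    volume {p : ℝ × ℝ | p.1 ∈ Icc a1 b1 ∧ p.2 ∈ Icc a2 b2 ∧
        p.1 + p.2 ∈ (Icc a1 b1 + Icc a2 b2) ∪ A} =
      volume {p : ℝ × ℝ | p.1 ∈ symInt (Icc a1 b1) ∧ p.2 ∈ symInt (Icc a2 b2) ∧
        p.1 + p.2 ∈ symInt ((Icc a1 b1 + Icc a2 b2) ∪ A)} :=
  stmt9_general a1 b1 a2 b2 h1 h2 E3 A hE3fin hbig hAdisj hAvol
end

section
/- Let t_1, ..., t_n be pairwise distinct reals (n ≥ 2) and let E_0, ..., E_n ⊂ ℝ be measurable with finite measures, where additionally E_0^* and each E_j^* are the symmetric closed intervals. Suppose for every x ∈ E_0^* the intervals {y : |y + t_j x| ≤ |E_j|/2}, 1 ≤ j ≤ n, truncated by r̄/2 from each side, have a common point. Then I(E_0^*, E_1^*, ..., E_n^*) = r̄ |E_0^*| + I(E_0^*, Ẽ_1^*, ..., Ẽ_n^*), where Ẽ_j^* is the closed interval centered at 0 with |Ẽ_j^*| = |E_j| − r̄, and I(F_0, ..., F_n) = ∫_ℝ 1_{F_0}(x) ∫_ℝ ∏_{j=1}^n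 1_{F_j}(y + t_j x) dy dx. -/
open MeasureTheory Set

/-!
Both sides are computed by Fubini: the fibre over `x` is `⋂ⱼ [aⱼ - tⱼ x, bⱼ - tⱼ x]`, the interval
`[maxⱼ (aⱼ - tⱼ x), minⱼ (bⱼ - tⱼ x)]`. Truncating every interval by `r/2` on each side truncates their intersection by `r/2`
on each side, so as long as the truncated intersection is nonempty its length drops by exactly `r`;
integrating over `x ∈ E₀^*` gives the identity.
-/

theorem Set.iInter_Icc_eq_Icc_sup'_inf' {ι α : Type*} [Fintype ι] [Nonempty ι] [LinearOrder α]
    (a b : ι → α) :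
    ⋂ j, Icc (a j) (b j) =
      Icc (Finset.univ.sup' Finset.univ_nonempty a) (Finset.univ.inf' Finset.univ_nonempty b) := by
  ext y
  simp [Finset.sup'_le_iff, Finset.le_inf'_iff, forall_and]

theorem Real.volume_iInter_Icc_eq_ofReal_add {ι : Type*} [Fintype ι] [Nonempty ι]
    (a b : ι → ℝ) {r : ℝ} (hr : 0 ≤ r)
    (hne : (⋂ j, Icc (a j + r / 2) (b j - r / 2)).Nonempty) :
    volume (⋂ j, Icc (a j) (b j)) =
      ENNReal.ofReal r + volume (⋂ j, Icc (a j + r / 2) (b j - r / 2)) := by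
  have inf'_sub : Finset.univ.inf' Finset.univ_nonempty (fun j => b j - r / 2) =
      Finset.univ.inf' Finset.univ_nonempty b - r / 2 :=
    (map_finset_inf' (OrderIso.addRight (-(r / 2))) Finset.univ_nonempty b).symm
  simp_rw [iInter_Icc_eq_Icc_sup'_inf', ← Finset.sup'_add, inf'_sub, nonempty_Icc] at hne ⊢
  rw [Real.volume_Icc, Real.volume_Icc, ← ENNReal.ofReal_add hr (by linarith)]
  congr 1
  ring

theorem Set.setOf_forall_add_mem_Icc {ι α : Type*} [AddCommGroup α] [LinearOrder α]
    [IsOrderedAddMonoid α] (a b c : ι → α) :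
    {y | ∀ j, y + c j ∈ Icc (a j) (b j)} = ⋂ j, Icc (a j - c j) (b j - c j) := by
  ext y
  simp [le_sub_iff_add_le]

theorem MeasureTheory.Measure.prod_setOf_fst_mem_and {α β : Type*} [MeasurableSpace α]
    [MeasurableSpace β] (μ : Measure α) (ν : Measure β) [SFinite μ] [SFinite ν] (A : Set α)
    {P : α × β → Prop} (hP : MeasurableSet {p | P p}) :
    μ.prod ν {p | p.1 ∈ A ∧ P p} = ∫⁻ x in A, ν {y | P (x, y)} ∂μ := by
  have hset : {p : α × β | p.1 ∈ A ∧ P p} = {p | P p} ∩ A ×ˢ univ := by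
    ext p; simp [and_comm]
  rw [hset, ← Measure.restrict_apply hP, ← Measure.restrict_prod_eq_prod_univ,
    Measure.prod_apply hP]
  rfl

theorem measurableSet_setOf_forall_add_mul_mem {ι : Type*} [Countable ι] (t : ι → ℝ)
    {S : ι → Set ℝ} (hS : ∀ j, MeasurableSet (S j)) :
    MeasurableSet {p : ℝ × ℝ | ∀ j, p.2 + t j * p.1 ∈ S j} := by
  simp only [ofPred_forall]
  exact .iInter fun j => (hS j).preimage (by fun_prop)

theorem stmt17_general (n : ℕ) (hn : 2 ≤ n) (t : Fin n → ℝ)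
    (E0 : Set ℝ) (E : Fin n → Set ℝ)
    (r : ℝ) (hr : 0 ≤ r)
    (hne : ∀ x ∈ symInt E0,
      (⋂ j, {y : ℝ | |y + t j * x| ≤ ((volume (E j)).toReal - r) / 2}).Nonempty) :
    volume {p : ℝ × ℝ | p.1 ∈ symInt E0 ∧ ∀ j, p.2 + t j * p.1 ∈ symInt (E j)} =
      ENNReal.ofReal r * volume (symInt E0) +
        volume {p : ℝ × ℝ | p.1 ∈ symInt E0 ∧ ∀ j, p.2 + t j * p.1 ∈
          Icc (-(((volume (E j)).toReal - r) / 2)) (((volume (E j)).toReal - r) / 2)} := by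
  have : Nonempty (Fin n) := ⟨⟨0, by omega⟩⟩
  have hsymInt : ∀ j, MeasurableSet (symInt (E j)) := fun _ => measurableSet_Icc
  rw [Measure.volume_eq_prod,
    Measure.prod_setOf_fst_mem_and _ _ _ (measurableSet_setOf_forall_add_mul_mem t hsymInt),
    Measure.prod_setOf_fst_mem_and _ _ _
      (measurableSet_setOf_forall_add_mul_mem t fun _ => measurableSet_Icc),
    ← setLIntegral_const, ← lintegral_add_left measurable_const]
  refine setLIntegral_congr_fun measurableSet_Icc fun x hx => ?_
  simp only [symInt, setOf_forall_add_mem_Icc]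
  have hfiber := hne x hx
  simp only [abs_le, ← mem_Icc, ← ofPred_forall, setOf_forall_add_mem_Icc] at hfiber
  have htrunc : ∀ j, Icc (-(((volume (E j)).toReal - r) / 2) - t j * x)
      (((volume (E j)).toReal - r) / 2 - t j * x) =
      Icc (-(volume (E j)).toReal / 2 - t j * x + r / 2)
        ((volume (E j)).toReal / 2 - t j * x - r / 2) := fun j => by
    congr 1 <;> ring
  simp only [htrunc] at hfiber ⊢
  exact Real.volume_iInter_Icc_eq_ofReal_add _ _ hr hfiber

/-- Exact truncation identity for symmetrized sets: if for every `x ∈ E₀^*` the symmetrically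
truncated fiber intervals have a common point, then
`I(E₀^*, E₁^*, …, Eₙ^*) = r̄ |E₀^*| + I(E₀^*, Ẽ₁^*, …, Ẽₙ^*)`. -/
theorem stmt17 (n : ℕ) (hn : 2 ≤ n) (t : Fin n → ℝ) (ht : Function.Injective t)
    (E0 : Set ℝ) (E : Fin n → Set ℝ)
    (hmeas0 : MeasurableSet E0) (hfin0 : volume E0 < ⊤)
    (hmeas : ∀ j, MeasurableSet (E j)) (hfin : ∀ j, volume (E j) < ⊤)
    (r : ℝ) (hr : 0 ≤ r) (hrle : ∀ j, r ≤ (volume (E j)).toReal)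
    (hne : ∀ x ∈ symInt E0,
      (⋂ j, {y : ℝ | |y + t j * x| ≤ ((volume (E j)).toReal - r) / 2}).Nonempty) :
    volume {p : ℝ × ℝ | p.1 ∈ symInt E0 ∧ ∀ j, p.2 + t j * p.1 ∈ symInt (E j)} =
      ENNReal.ofReal r * volume (symInt E0) +
        volume {p : ℝ × ℝ | p.1 ∈ symInt E0 ∧ ∀ j, p.2 + t j * p.1 ∈
          Icc (-(((volume (E j)).toReal - r) / 2)) (((volume (E j)).toReal - r) / 2)} :=
  stmt17_general n hn t E0 E r hr hne
end
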